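/- arXiv:2509.06203 — 6 statements merged into one kernel-verified Lean document; each statement's English description precedes it below -/
import Mathlib

section
/- Let $h \in (0,4)$, and suppose $u_0 \in (-2,0)$ and $u_1 \in (0,\infty)$ satisfy $(u_0+2)^2 e^{-u_0} = 4-h$ and $(u_1+2)^2 e^{-u_1} = 4-h$. Then $\int_{u_0}^{u_1} u\, e^{-u} \sqrt{(u+2)^2 - (4-h)e^{u}}\, du = 0$. -/
/-!
On `[-2, ∞)` the first integral `E(u) = (u + 2)² e⁻ᵘ` is at most `4`, with equality only at
`u = 0`, so `s = √(4 - E(u))` is a valid change of variables on each of `[u₀, 0]` and `[0, u₁]`.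
It turns `u e⁻ᵘ √((u + 2)² - c eᵘ) du` into `2 s √(4 - c - s²) / √(4 - s²) ds` on both halves,
and since `E(u₀) = E(u₁) = 4 - h`, it maps them onto `[0, √h]` with opposite orientations,
so the two contributions cancel.
-/

open Real Set MeasureTheory intervalIntegral

noncomputable section

namespace LotkaVolterra

def energy (u : ℝ) : ℝ := (u + 2) ^ 2 * exp (-u)

def chart (u : ℝ) : ℝ := √(4 - energy u)

def abelKernel (c x : ℝ) : ℝ := 2 * x * √(4 - c - x ^ 2) / √(4 - x ^ 2)

lemma hasDerivAt_energy (u : ℝ) : HasDerivAt energy (-(u * (u + 2) * exp (-u))) u := by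
  have hsq : HasDerivAt (fun u : ℝ => (u + 2) ^ 2) (2 * (u + 2)) u := by
    simpa using ((hasDerivAt_id u).add_const 2).fun_pow 2
  have hexp : HasDerivAt (fun u : ℝ => exp (-u)) (-exp (-u)) u := by
    simpa using (hasDerivAt_id u).neg.exp
  exact (hsq.fun_mul hexp).congr_deriv (by ring)

lemma continuous_energy : Continuous energy := by
  unfold energy; fun_prop

lemma energy_zero : energy 0 = 4 := by
  norm_num [energy]

lemma energy_pos {u : ℝ} (hu : -2 < u) : 0 < energy u := by
  have : 0 < u + 2 := by linarith
  unfold energy; positivity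

lemma strictMonoOn_energy : StrictMonoOn energy (Icc (-2) 0) := by
  refine strictMonoOn_of_deriv_pos (convex_Icc _ _) continuous_energy.continuousOn fun x hx => ?_
  rw [interior_Icc] at hx
  rw [(hasDerivAt_energy x).deriv, neg_pos]
  exact mul_neg_of_neg_of_pos (mul_neg_of_neg_of_pos hx.2 (by linarith [hx.1])) (exp_pos _)

lemma strictAntiOn_energy : StrictAntiOn energy (Ici 0) := by
  refine strictAntiOn_of_deriv_neg (convex_Ici _) continuous_energy.continuousOn fun x hx => ?_
  rw [interior_Ici] at hx
  rw [(hasDerivAt_energy x).deriv, neg_lt_zero]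
  exact mul_pos (mul_pos hx (by linarith [mem_Ioi.1 hx])) (exp_pos _)

lemma energy_lt_four {u : ℝ} (hu : -2 ≤ u) (h0 : u ≠ 0) : energy u < 4 := by
  rw [← energy_zero]
  rcases h0.lt_or_gt with hneg | hpos
  · exact strictMonoOn_energy ⟨hu, hneg.le⟩ ⟨by norm_num, le_rfl⟩ hneg
  · exact strictAntiOn_energy self_mem_Ici hpos.le hpos

lemma chart_sq {u : ℝ} (hu : -2 ≤ u) : chart u ^ 2 = 4 - energy u := by
  rcases eq_or_ne u 0 with rfl | h0
  · simp [chart, energy_zero]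
  · exact sq_sqrt (by linarith [energy_lt_four hu h0])

lemma chart_mem_Ioo {u : ℝ} (hu : -2 < u) : chart u ∈ Ioo (-2) 2 := by
  have h4 : chart u ^ 2 < 2 ^ 2 := by
    rw [chart_sq hu.le]; linarith [energy_pos hu]
  exact abs_lt_of_sq_lt_sq' h4 zero_le_two

lemma hasDerivAt_chart {u : ℝ} (hu : -2 ≤ u) (h0 : u ≠ 0) :
    HasDerivAt chart (u * (u + 2) * exp (-u) / (2 * chart u)) u := by
  have h4 : 4 - energy u ≠ 0 := by linarith [energy_lt_four hu h0]
  exact (((hasDerivAt_energy u).const_sub 4).sqrt h4).congr_deriv (by rw [neg_neg]; rfl)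

lemma continuousOn_abelKernel (c : ℝ) : ContinuousOn (abelKernel c) (Ioo (-2) 2) := by
  refine ContinuousOn.div (by fun_prop) (by fun_prop) fun x hx => ?_
  refine sqrt_ne_zero'.2 ?_
  nlinarith [hx.1, hx.2]

-- At `u = 0` the right side is `0 / 0 * _ = 0`, matching the left side.
lemma integrand_eq_deriv_mul_abelKernel (c : ℝ) {u : ℝ} (hu : -2 < u) :
    u * exp (-u) * √((u + 2) ^ 2 - c * exp u) =
      u * (u + 2) * exp (-u) / (2 * chart u) * abelKernel c (chart u) := by
  rcases eq_or_ne u 0 with rfl | h0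
  · simp
  have h2 : 0 < u + 2 := by linarith
  have hs : chart u ≠ 0 := sqrt_ne_zero'.2 (by linarith [energy_lt_four hu.le h0])
  have hkernel : abelKernel c (chart u) =
      2 * chart u * √((u + 2) ^ 2 - c * exp u) / (u + 2) := by
    have hc : 4 - c - chart u ^ 2 = ((u + 2) ^ 2 - c * exp u) * exp (-u) := by
      rw [chart_sq hu.le, energy, exp_neg]; field_simp; ring
    have hd : 4 - chart u ^ 2 = (u + 2) ^ 2 * exp (-u) := by
      rw [chart_sq hu.le, energy]; ring
    have he : √(exp (-u)) ≠ 0 := by positivity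
    rw [abelKernel, hc, hd, sqrt_mul' _ (exp_pos _).le, sqrt_mul (sq_nonneg _), sqrt_sq h2.le]
    field_simp
  rw [hkernel]
  field_simp

lemma integral_eq_integral_abelKernel (c : ℝ) {a b : ℝ} (ha : -2 < a) (hab : a ≤ b)
    (h0 : (0 : ℝ) ∉ Ioo a b) :
    ∫ u in a..b, u * exp (-u) * √((u + 2) ^ 2 - c * exp u) =
      ∫ x in chart a..chart b, abelKernel c x := by
  have hmem : ∀ u ∈ uIcc a b, -2 < u := fun u hu => by
    rw [uIcc_of_le hab] at hu; linarith [hu.1]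
  have himage : chart '' uIcc a b ⊆ Ioo (-2) 2 := by
    rintro _ ⟨u, hu, rfl⟩; exact chart_mem_Ioo (hmem u hu)
  have hchart : Continuous chart := (continuous_const.sub continuous_energy).sqrt
  rw [integral_congr fun u hu => integrand_eq_deriv_mul_abelKernel c (hmem u hu)]
  refine integral_deriv_smul_comp''' hchart.continuousOn (fun u hu => ?_)
    ((continuousOn_abelKernel c).mono ((image_mono Ioo_subset_Icc_self).trans himage))
    (((continuousOn_abelKernel c).mono himage).integrableOn_compact
      (isCompact_uIcc.image hchart)) ?_
  · rw [min_eq_left hab, max_eq_right hab] at hu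
    exact (hasDerivAt_chart (by linarith [hu.1]) (ne_of_mem_of_not_mem hu h0)).hasDerivWithinAt
  · exact (Continuous.integrableOn_uIcc (by fun_prop :
      Continuous fun u : ℝ => u * exp (-u) * √((u + 2) ^ 2 - c * exp u))).congr_fun
      (fun u hu => integrand_eq_deriv_mul_abelKernel c (hmem u hu)) measurableSet_uIcc

end LotkaVolterra

end

open LotkaVolterra in
theorem lv_abelian_integral_zero_general
    (h : ℝ)
    (u₀ u₁ : ℝ) (hu₀ : u₀ ∈ Set.Ioo (-2 : ℝ) 0) (hu₁ : u₁ ∈ Set.Ioi (0 : ℝ))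
    (he₀ : (u₀ + 2) ^ 2 * Real.exp (-u₀) = 4 - h)
    (he₁ : (u₁ + 2) ^ 2 * Real.exp (-u₁) = 4 - h) :
    ∫ u in u₀..u₁, u * Real.exp (-u) *
      Real.sqrt ((u + 2) ^ 2 - (4 - h) * Real.exp u) = 0 := by
  have hchart₀ : chart u₀ = √h := by rw [chart, energy, he₀, sub_sub_cancel]
  have hchart₁ : chart u₁ = √h := by rw [chart, energy, he₁, sub_sub_cancel]
  have hchart_zero : chart 0 = 0 := by simp [chart, energy_zero]
  have hleft := integral_eq_integral_abelKernel (4 - h) hu₀.1 hu₀.2.le (fun hx => hx.2.false)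
  have hright := integral_eq_integral_abelKernel (4 - h) (by norm_num) (le_of_lt hu₁)
    (fun hx => hx.1.false)
  have hcont : Continuous fun u : ℝ => u * exp (-u) * √((u + 2) ^ 2 - (4 - h) * exp u) := by
    fun_prop
  rw [← integral_add_adjacent_intervals (b := 0) (hcont.intervalIntegrable _ _)
    (hcont.intervalIntegrable _ _), hleft, hright,
    hchart₀, hchart₁, hchart_zero, integral_symm, neg_add_cancel]

theorem lv_abelian_integral_zero
    (h : ℝ) (hh : h ∈ Set.Ioo (0 : ℝ) 4)
    (u₀ u₁ : ℝ) (hu₀ : u₀ ∈ Set.Ioo (-2 : ℝ) 0) (hu₁ : u₁ ∈ Set.Ioi (0 : ℝ))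
    (he₀ : (u₀ + 2) ^ 2 * Real.exp (-u₀) = 4 - h)
    (he₁ : (u₁ + 2) ^ 2 * Real.exp (-u₁) = 4 - h) :
    ∫ u in u₀..u₁, u * Real.exp (-u) *
      Real.sqrt ((u + 2) ^ 2 - (4 - h) * Real.exp u) = 0 :=
  lv_abelian_integral_zero_general h u₀ u₁ hu₀ hu₁ he₀ he₁
end

section
/- Define $s:(-2,\infty) \to \mathbb{R}$ by $s(u) = \operatorname{sgn}(u)\sqrt{4 - (u+2)^2 e^{-u}}$ (so $s(0)=0$). Then $s$ is differentiable at every point of $(-2,\infty)$; for $u \neq 0$ one has $s'(u) = \dfrac{u(u+2)e^{-u}}{2 s(u)}$, and $s'(0) = 1$. In particular $s$ is continuously differentiable in a neighborhood of $0$. -/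
/-!
Write `g u = 4 - (u + 2)² e^{-u}`. Since `sign u · √x = u · √(x / u²)` for all `u`, we have
`s u / u = √(g u / u²)`, and `g 0 = 0`, `g' u = u (u + 2) e^{-u}`, so by L'Hôpital
`g u / u² → 1`. This gives `s' 0 = 1`, and, through `s' u = (u + 2) e^{-u} / (2 · s u / u)`,
the continuity of `s'` at `0`. Away from `0` the sign is locally constant and `g > 0`, so `s`
is `±√g` there.
-/

open Real Set Filter Topology

theorem Real.sign_eventuallyEq {u : ℝ} (hu : u ≠ 0) :
    Real.sign =ᶠ[𝓝 u] fun _ => Real.sign u := by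
  rcases hu.lt_or_gt with hneg | hpos
  · filter_upwards [Iio_mem_nhds hneg] with v hv
    rw [Real.sign_of_neg hv, Real.sign_of_neg hneg]
  · filter_upwards [Ioi_mem_nhds hpos] with v hv
    rw [Real.sign_of_pos hv, Real.sign_of_pos hpos]

theorem HasDerivAt.sign_mul {f : ℝ → ℝ} {f' u : ℝ} (hf : HasDerivAt f f' u) (hu : u ≠ 0) :
    HasDerivAt (fun v => Real.sign v * f v) (Real.sign u * f') u :=
  (hf.const_mul (Real.sign u)).congr_of_eventuallyEq <|
    (Real.sign_eventuallyEq hu).mono fun v hv => by simp only [hv]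

theorem Real.sign_mul_sqrt (u x : ℝ) : Real.sign u * √x = u * √(x / u ^ 2) := by
  rw [Real.sqrt_div' x (sq_nonneg u), Real.sqrt_sq_eq_abs]
  rcases lt_trichotomy u 0 with h | rfl | h
  · rw [Real.sign_of_neg h, abs_of_neg h]
    field_simp [h.ne]
  · simp
  · rw [Real.sign_of_pos h, abs_of_pos h]
    field_simp [h.ne']

theorem tendsto_div_sq_nhdsNE_of_hasDerivAt {f h : ℝ → ℝ} (hf0 : f 0 = 0)
    (hf : ∀ x, HasDerivAt f (x * h x) x) (hh : ContinuousAt h 0) :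
    Tendsto (fun x => f x / x ^ 2) (𝓝[≠] 0) (𝓝 (h 0 / 2)) := by
  refine HasDerivAt.lhopital_zero_nhdsNE (f' := fun x => x * h x) (g' := fun x => 2 * x)
    (.of_forall hf) (.of_forall fun x => by simpa using hasDerivAt_pow 2 x)
    (eventually_nhdsWithin_of_forall fun x hx => mul_ne_zero two_ne_zero hx) ?_ ?_ ?_
  · simpa [hf0] using (hf 0).continuousAt.tendsto.mono_left nhdsWithin_le_nhds
  · exact ((continuous_pow 2).tendsto' 0 0 (by simp)).mono_left nhdsWithin_le_nhds
  · refine ((hh.tendsto.div_const 2).mono_left nhdsWithin_le_nhds).congr' ?_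
    filter_upwards [self_mem_nhdsWithin] with x hx
    field_simp [show x ≠ 0 from hx]

theorem contDiffOn_one_of_isOpen {s : Set ℝ} {f : ℝ → ℝ} (hs : IsOpen s)
    (hdiff : DifferentiableOn ℝ f s) (hcont : ContinuousOn (deriv f) s) :
    ContDiffOn ℝ 1 f s := by
  rw [show (1 : WithTop ℕ∞) = 0 + 1 from rfl, contDiffOn_succ_iff_deriv_of_isOpen hs]
  exact ⟨hdiff, by simp, contDiffOn_zero.2 hcont⟩

noncomputable def lvRadicand (u : ℝ) : ℝ := 4 - (u + 2) ^ 2 * exp (-u)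

noncomputable def lvChange (u : ℝ) : ℝ := Real.sign u * √(lvRadicand u)

theorem hasDerivAt_lvRadicand (u : ℝ) :
    HasDerivAt lvRadicand (u * ((u + 2) * exp (-u))) u := by
  refine ((((hasDerivAt_id u).add_const 2).fun_pow 2).fun_mul (hasDerivAt_neg u).exp).const_sub 4
    |>.congr_deriv ?_
  norm_num
  ring

theorem lvRadicand_pos {u : ℝ} (h2 : -2 < u) (h0 : u ≠ 0) : 0 < lvRadicand u := by
  have hlt : u / 2 + 1 < exp (u / 2) := add_one_lt_exp (by simpa using h0)
  have hsq : exp (u / 2) ^ 2 = exp u := by rw [← exp_nat_mul]; ring_nf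
  have key : (u + 2) ^ 2 < 4 * exp u := by nlinarith
  have hmul : exp (-u) * exp u = 1 := by rw [← exp_add, neg_add_cancel, exp_zero]
  unfold lvRadicand
  nlinarith [exp_pos (-u)]

theorem tendsto_lvRadicand_div_sq :
    Tendsto (fun u => lvRadicand u / u ^ 2) (𝓝[≠] 0) (𝓝 1) := by
  have h := tendsto_div_sq_nhdsNE_of_hasDerivAt (by norm_num [lvRadicand])
    hasDerivAt_lvRadicand (by fun_prop)
  norm_num at h
  exact h

theorem lvChange_eq_mul_sqrt (u : ℝ) : lvChange u = u * √(lvRadicand u / u ^ 2) :=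
  Real.sign_mul_sqrt u (lvRadicand u)

theorem lvChange_ne_zero {u : ℝ} (h2 : -2 < u) (h0 : u ≠ 0) : lvChange u ≠ 0 :=
  mul_ne_zero (Real.sign_eq_zero_iff.not.2 h0) (Real.sqrt_pos.2 (lvRadicand_pos h2 h0)).ne'

theorem hasDerivAt_lvChange {u : ℝ} (h2 : -2 < u) (h0 : u ≠ 0) :
    HasDerivAt lvChange (u * (u + 2) * exp (-u) / (2 * lvChange u)) u := by
  refine (((hasDerivAt_lvRadicand u).sqrt (lvRadicand_pos h2 h0).ne').sign_mul h0).congr_deriv ?_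
  have hsqrt := (Real.sqrt_pos.2 (lvRadicand_pos h2 h0)).ne'
  rw [lvChange]
  field_simp [hsqrt]
  rw [div_eq_mul_inv, Real.inv_sign]
  ring

theorem tendsto_lvChange_div_self :
    Tendsto (fun u => lvChange u / u) (𝓝[≠] 0) (𝓝 1) := by
  have h := (continuous_sqrt.tendsto 1).comp tendsto_lvRadicand_div_sq
  rw [sqrt_one] at h
  refine h.congr' ?_
  filter_upwards [self_mem_nhdsWithin] with u hu
  rw [Function.comp_apply, lvChange_eq_mul_sqrt, mul_div_cancel_left₀ _ hu]

theorem hasDerivAt_lvChange_zero : HasDerivAt lvChange 1 0 := by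
  rw [hasDerivAt_iff_tendsto_slope]
  refine tendsto_lvChange_div_self.congr fun u => ?_
  simp [slope_def_field, lvChange, lvRadicand]

theorem differentiableAt_lvChange {u : ℝ} (h2 : -2 < u) : DifferentiableAt ℝ lvChange u := by
  rcases eq_or_ne u 0 with rfl | h0
  · exact hasDerivAt_lvChange_zero.differentiableAt
  · exact (hasDerivAt_lvChange h2 h0).differentiableAt

theorem tendsto_deriv_lvChange_zero : Tendsto (deriv lvChange) (𝓝[≠] 0) (𝓝 1) := by
  have hnum : Tendsto (fun u : ℝ => (u + 2) * exp (-u)) (𝓝[≠] 0) (𝓝 2) := by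
    have h : Continuous fun u : ℝ => (u + 2) * exp (-u) := by fun_prop
    simpa using h.continuousAt.tendsto.mono_left (nhdsWithin_le_nhds (a := 0))
  have h := hnum.div (tendsto_lvChange_div_self.const_mul 2) (by norm_num)
  norm_num at h
  refine h.congr' ?_
  filter_upwards [self_mem_nhdsWithin,
    nhdsWithin_le_nhds (Ioi_mem_nhds (by norm_num : (-2 : ℝ) < 0))] with u h0 h2
  rw [(hasDerivAt_lvChange h2 h0).deriv, Pi.div_apply]
  field_simp [show u ≠ 0 from h0]

theorem continuousAt_deriv_lvChange {u : ℝ} (h2 : -2 < u) : ContinuousAt (deriv lvChange) u := by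
  rcases eq_or_ne u 0 with rfl | h0
  · rw [← continuousWithinAt_compl_self, ContinuousWithinAt, hasDerivAt_lvChange_zero.deriv]
    exact tendsto_deriv_lvChange_zero
  · have hderiv :
        deriv lvChange =ᶠ[𝓝 u] fun v => v * (v + 2) * exp (-v) / (2 * lvChange v) := by
      filter_upwards [isOpen_Ioi.mem_nhds h2, isOpen_ne.mem_nhds h0] with v hv2 hv0
      exact (hasDerivAt_lvChange hv2 hv0).deriv
    refine ContinuousAt.congr ?_ hderiv.symm
    exact (by fun_prop : Continuous fun v : ℝ => v * (v + 2) * exp (-v)).continuousAt.div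
      ((differentiableAt_lvChange h2).continuousAt.const_mul 2)
      (mul_ne_zero two_ne_zero (lvChange_ne_zero h2 h0))

theorem contDiffOn_lvChange : ContDiffOn ℝ 1 lvChange (Ioi (-2)) :=
  contDiffOn_one_of_isOpen isOpen_Ioi
    (fun _ hu => (differentiableAt_lvChange hu).differentiableWithinAt)
    (fun _ hu => (continuousAt_deriv_lvChange hu).continuousWithinAt)

theorem lv_change_of_variables_C1
    (s : ℝ → ℝ)
    (hs : ∀ u : ℝ, s u = Real.sign u * Real.sqrt (4 - (u + 2) ^ 2 * Real.exp (-u))) :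
    (∀ u ∈ Set.Ioi (-2 : ℝ), DifferentiableAt ℝ s u) ∧
    (∀ u ∈ Set.Ioi (-2 : ℝ), u ≠ 0 →
      HasDerivAt s (u * (u + 2) * Real.exp (-u) / (2 * s u)) u) ∧
    HasDerivAt s 1 0 ∧
    ∃ ε > (0 : ℝ), ContDiffOn ℝ 1 s (Metric.ball (0 : ℝ) ε) := by
  obtain rfl : s = lvChange := funext hs
  refine ⟨fun u hu => differentiableAt_lvChange hu, fun u hu h0 => hasDerivAt_lvChange hu h0,
    hasDerivAt_lvChange_zero, 2, two_pos, contDiffOn_lvChange.mono ?_⟩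
  rw [Real.ball_eq_Ioo, zero_sub]
  exact Ioo_subset_Ioi_self
end

section
/- Let $r \in (0, 4/27)$, and suppose $u_0 \in (-2/3, 0)$ and $u_1 \in (0, 1/3)$ satisfy $u_0^2(1+u_0) = r$ and $u_1^2(1+u_1) = r$. Then $\int_{u_0}^{u_1} \dfrac{u\,\sqrt{r - u^2(1+u)}}{\sqrt{1-3u}}\, du = 0$. -/
/-! The substitution `s = u √(1 + u)` turns `u² (1 + u)` into `s²` and, since
`4 - 27 u² (1 + u) = (1 - 3u)(2 + 3u)²`, turns the integrand into
`2 s √(r - s²) / √(4 - 27 s²)`. The endpoints `u₀, u₁` go to `-√r, √r`, so the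
integral becomes that of an odd function over a symmetric interval. -/

open Real Set

theorem intervalIntegral.integral_eq_zero_of_odd {E : Type*} [NormedAddCommGroup E]
    [NormedSpace ℝ E] {f : ℝ → E} (hf : ∀ x, f (-x) = -f x) (a : ℝ) :
    ∫ x in -a..a, f x = 0 := by
  have h := intervalIntegral.integral_comp_neg (a := -a) (b := a) f
  simp only [hf, intervalIntegral.integral_neg, neg_neg] at h
  have h2 : (2 : ℝ) • ∫ x in -a..a, f x = 0 := by
    rw [two_smul]
    nth_rewrite 1 [← h]
    exact neg_add_cancel _
  simpa using h2

theorem hasDerivAt_mul_sqrt_one_add {x : ℝ} (hx : 0 < 1 + x) :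
    HasDerivAt (fun x => x * √(1 + x)) ((2 + 3 * x) / (2 * √(1 + x))) x := by
  have hsqrt := ((hasDerivAt_id' x).const_add 1).sqrt hx.ne'
  refine ((hasDerivAt_id' x).mul hsqrt).congr_deriv ?_
  have hs : √(1 + x) ≠ 0 := (sqrt_pos.mpr hx).ne'
  field_simp
  rw [sq_sqrt hx.le]
  ring

theorem mul_sqrt_one_add_sq {x : ℝ} (hx : 0 ≤ 1 + x) : (x * √(1 + x)) ^ 2 = x ^ 2 * (1 + x) := by
  rw [mul_pow, sq_sqrt hx]

theorem four_sub_mul_sq_mul_sqrt_one_add_sq {x : ℝ} (hx : 0 ≤ 1 + x) :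
    4 - 27 * (x * √(1 + x)) ^ 2 = (1 - 3 * x) * (2 + 3 * x) ^ 2 := by
  rw [mul_sqrt_one_add_sq hx]
  ring

theorem mul_sqrt_one_add_eq_sqrt {x : ℝ} (hx : 0 ≤ x) : x * √(1 + x) = √(x ^ 2 * (1 + x)) := by
  rw [sqrt_mul (by positivity), sqrt_sq hx]

theorem mul_sqrt_one_add_eq_neg_sqrt {x : ℝ} (hx : x ≤ 0) :
    x * √(1 + x) = -√(x ^ 2 * (1 + x)) := by
  rw [← neg_sq, sqrt_mul (sq_nonneg _), sqrt_sq (neg_nonneg.mpr hx)]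
  ring

theorem integral_eq_integral_subst_mul_sqrt_one_add (r : ℝ) {a b : ℝ}
    (ha : a ∈ Ioo (-2 / 3 : ℝ) (1 / 3)) (hb : b ∈ Ioo (-2 / 3 : ℝ) (1 / 3)) :
    ∫ u in a..b, u * √(r - u ^ 2 * (1 + u)) / √(1 - 3 * u) =
      ∫ s in a * √(1 + a)..b * √(1 + b), 2 * s * √(r - s ^ 2) / √(4 - 27 * s ^ 2) := by
  have hfactors : ∀ x ∈ uIcc a b, 0 < 1 + x ∧ 0 < 1 - 3 * x ∧ 0 < 2 + 3 * x := fun x hx => by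
    obtain ⟨hx₀, hx₁⟩ := ordConnected_Ioo.uIcc_subset ha hb hx
    exact ⟨by linarith, by linarith, by linarith⟩
  let g : ℝ → ℝ := fun s => 2 * s * √(r - s ^ 2) / √(4 - 27 * s ^ 2)
  have hsubst := intervalIntegral.integral_comp_mul_deriv' (g := g)
    (fun x hx => hasDerivAt_mul_sqrt_one_add (hfactors x hx).1)
    (ContinuousOn.div (by fun_prop) (by fun_prop) fun x hx => by
      have := (hfactors x hx).1
      positivity)
    (ContinuousOn.div (by fun_prop) (by fun_prop) (by
      rintro _ ⟨x, hx, rfl⟩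
      obtain ⟨h1, h3, h2⟩ := hfactors x hx
      rw [four_sub_mul_sq_mul_sqrt_one_add_sq h1.le]
      positivity))
  rw [← hsubst]
  refine intervalIntegral.integral_congr fun x hx => ?_
  obtain ⟨h1, h3, h2⟩ := hfactors x hx
  simp only [g, Function.comp_apply]
  rw [four_sub_mul_sq_mul_sqrt_one_add_sq h1.le, mul_sqrt_one_add_sq h1.le,
    sqrt_mul h3.le, sqrt_sq h2.le]
  have : 0 < √(1 + x) := sqrt_pos.mpr h1
  have : 0 < √(1 - 3 * x) := sqrt_pos.mpr h3
  field_simp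
  rw [mul_div_mul_right _ _ (by linarith)]

theorem hamiltonian_abelian_integral_zero_general
    (r : ℝ)
    (u₀ u₁ : ℝ) (hu₀ : u₀ ∈ Set.Ioo (-2 / 3 : ℝ) 0) (hu₁ : u₁ ∈ Set.Ioo (0 : ℝ) (1 / 3))
    (he₀ : u₀ ^ 2 * (1 + u₀) = r) (he₁ : u₁ ^ 2 * (1 + u₁) = r) :
    ∫ u in u₀..u₁, u * Real.sqrt (r - u ^ 2 * (1 + u)) / Real.sqrt (1 - 3 * u) = 0 := by
  obtain ⟨hu₀l, hu₀r⟩ := hu₀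
  obtain ⟨hu₁l, hu₁r⟩ := hu₁
  rw [integral_eq_integral_subst_mul_sqrt_one_add r ⟨hu₀l, by linarith⟩ ⟨by linarith, hu₁r⟩,
    mul_sqrt_one_add_eq_neg_sqrt hu₀r.le, mul_sqrt_one_add_eq_sqrt hu₁l.le, he₀, he₁]
  refine intervalIntegral.integral_eq_zero_of_odd (fun s => ?_) _
  simp only [neg_sq]
  ring

theorem hamiltonian_abelian_integral_zero
    (r : ℝ) (hr : r ∈ Set.Ioo (0 : ℝ) (4 / 27))
    (u₀ u₁ : ℝ) (hu₀ : u₀ ∈ Set.Ioo (-2 / 3 : ℝ) 0) (hu₁ : u₁ ∈ Set.Ioo (0 : ℝ) (1 / 3))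
    (he₀ : u₀ ^ 2 * (1 + u₀) = r) (he₁ : u₁ ^ 2 * (1 + u₁) = r) :
    ∫ u in u₀..u₁, u * Real.sqrt (r - u ^ 2 * (1 + u)) / Real.sqrt (1 - 3 * u) = 0 :=
  hamiltonian_abelian_integral_zero_general r u₀ u₁ hu₀ hu₁ he₀ he₁
end

section
/- Let $\alpha, \beta, \gamma \in \mathbb{R}$ with $\alpha \neq 0$, $\beta \neq 0$, and suppose $\alpha(\alpha + 3\gamma)^2 = \beta^2(\alpha + 2\gamma)$. Then there exists a real number $r \neq 0$ satisfying simultaneously $3\alpha r^2 + 2\beta r - \alpha = 0$ and $\alpha r^2 = \alpha + 2\gamma$; indeed $r = -(\alpha+3\gamma)/\beta$ is such a number. -/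
open Real Set

theorem common_nonzero_root_exists
    (α β γ : ℝ) (hα : α ≠ 0) (hβ : β ≠ 0)
    (hq : α * (α + 3 * γ) ^ 2 = β ^ 2 * (α + 2 * γ)) :
    ∃ r : ℝ, r ≠ 0 ∧ 3 * α * r ^ 2 + 2 * β * r - α = 0 ∧ α * r ^ 2 = α + 2 * γ ∧
      r = -(α + 3 * γ) / β := by
  refine ⟨-(α + 3 * γ) / β, ?_, ?_, ?_, rfl⟩
  · intro h
    have h3 : α + 3 * γ = 0 := by
      field_simp at h; linarith
    have h2 : α + 2 * γ = 0 := by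
      have : (0:ℝ) = β ^ 2 * (α + 2 * γ) := by rw [← hq, h3]; ring
      have hb2 : β ^ 2 ≠ 0 := pow_ne_zero _ hβ
      have := this.symm
      rcases mul_eq_zero.mp this with h | h
      · exact absurd h hb2
      · exact h
    exact hα (by linarith)
  · have key : α * (-(α + 3 * γ) / β) ^ 2 = α + 2 * γ := by
      field_simp
      nlinarith [hq]
    have h2 : 2 * β * (-(α + 3 * γ) / β) = -2 * (α + 3 * γ) := by field_simp
    nlinarith [key, h2]
  · field_simp
    nlinarith [hq]
end

section
/- Let $\alpha, u, v \in \mathbb{R}$, set $F = \sqrt{1 + (\alpha^2+2)u^2}$, $x = \dfrac{u}{F + \alpha u}$, and $y = \dfrac{v}{F + \alpha u}$. Then $F + \alpha u > 0$, $1 - 2x(\alpha + x) = (F + \alpha u)^{-2} > 0$, and $\dfrac{x^2 + y^2}{1 - 2x(\alpha + x)} = u^2 + v^2$. -/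
/-! With `D = F + α u`, where `F² = 1 + (α² + 2) u²`, one has `|α u| < F`, so `D > 0`, and
`D² - 2 u (α D + u) = F² - (α² + 2) u² = 1`. Dividing by `D²` gives `1 - 2 x (α + x) = D⁻²`
for `x = u / D`, and then `H(x, y) = (u² + v²) D⁻² / D⁻² = u² + v²`. -/

open Real

lemma abs_mul_lt_sqrt_one_add_mul_sq (α u : ℝ) : |α * u| < √(1 + (α ^ 2 + 2) * u ^ 2) := by
  rw [lt_sqrt (abs_nonneg _), sq_abs]
  nlinarith [sq_nonneg u]

lemma sqrt_one_add_mul_sq_add_mul_pos (α u : ℝ) : 0 < √(1 + (α ^ 2 + 2) * u ^ 2) + α * u := by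
  linarith [neg_abs_le (α * u), abs_mul_lt_sqrt_one_add_mul_sq α u]

lemma one_sub_two_mul_div_mul_add_div {α u F : ℝ} (hF : F ^ 2 = 1 + (α ^ 2 + 2) * u ^ 2)
    (hD : F + α * u ≠ 0) :
    1 - 2 * (u / (F + α * u)) * (α + u / (F + α * u)) = ((F + α * u) ^ 2)⁻¹ := by
  generalize hDdef : F + α * u = D at hD ⊢
  field_simp
  linear_combination hF - (D - α * u + F) * hDdef

lemma div_sq_add_div_sq_div_inv_sq {D : ℝ} (hD : D ≠ 0) (u v : ℝ) :
    ((u / D) ^ 2 + (v / D) ^ 2) / (D ^ 2)⁻¹ = u ^ 2 + v ^ 2 := by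
  field_simp

theorem cr1_change_of_variables
    (α u v : ℝ)
    (F : ℝ) (hF : F = Real.sqrt (1 + (α ^ 2 + 2) * u ^ 2))
    (x y : ℝ) (hx : x = u / (F + α * u)) (hy : y = v / (F + α * u)) :
    0 < F + α * u ∧
    1 - 2 * x * (α + x) = (F + α * u) ^ (-2 : ℤ) ∧
    0 < (1 : ℝ) - 2 * x * (α + x) ∧
    (x ^ 2 + y ^ 2) / (1 - 2 * x * (α + x)) = u ^ 2 + v ^ 2 := by
  have hD : 0 < F + α * u := hF ▸ sqrt_one_add_mul_sq_add_mul_pos α u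
  have hF2 : F ^ 2 = 1 + (α ^ 2 + 2) * u ^ 2 := hF ▸ sq_sqrt (by positivity)
  have key : 1 - 2 * x * (α + x) = ((F + α * u) ^ 2)⁻¹ :=
    hx ▸ one_sub_two_mul_div_mul_add_div hF2 hD.ne'
  refine ⟨hD, by rw [key, zpow_neg, zpow_two, sq], by rw [key]; positivity, ?_⟩
  rw [key, hx, hy, div_sq_add_div_sq_div_inv_sq hD.ne']
end

section
/- Let $0 < r < 1/16$ and, for $\theta \in \mathbb{R}$, set $S(\theta) = \dfrac{\sqrt{1 - 16r\sin\theta}}{3}$. Then $\int_{-\pi}^{\pi} \frac{r}{15552\, S(\theta)^3}\Big(16 r \cos^2\theta\,\big(9 S(\theta)^2 (3 S(\theta) - 1) + 4 r (16 r - \sin\theta)\big) + 9 S(\theta)^2 \sin\theta\,\big(9 S(\theta)^2 (3 S(\theta) - 1) - 8 r (16 r - \sin\theta)\big)\Big)\, d\theta = 0$. -/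
/-!
Put `w = √(1 - 16 r sin θ) = 3 S(θ)`. The integrand is the derivative of the `2π`-periodic function
`r cos θ / 576 · ((128 r² + 1 - 24 r sin θ) / w - w²)`: after clearing denominators the two sides
differ by a multiple of `w² - (1 - 16 r sin θ)`. Hence its integral over a period vanishes.
-/

open Real

theorem Function.Periodic.intervalIntegral_eq_zero_of_hasDerivAt {E : Type*}
    [NormedAddCommGroup E] [NormedSpace ℝ E] [CompleteSpace E] {F f : ℝ → E} {T : ℝ}
    (hF : Function.Periodic F T) (hderiv : ∀ x, HasDerivAt F (f x) x) (a : ℝ)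
    (hint : IntervalIntegrable f MeasureTheory.volume a (a + T)) :
    ∫ x in a..a + T, f x = 0 := by
  rw [intervalIntegral.integral_eq_sub_of_hasDerivAt (fun x _ => hderiv x) hint, hF, sub_self]

theorem one_sub_mul_sin_pos {a : ℝ} (ha : |a| < 1) (θ : ℝ) : 0 < 1 - a * sin θ := by
  have : a * sin θ < 1 := calc
    a * sin θ ≤ |a| * |sin θ| := abs_mul a (sin θ) ▸ le_abs_self _
    _ ≤ |a| * 1 := mul_le_mul_of_nonneg_left (abs_sin_le_one θ) (abs_nonneg a)
    _ < 1 := by rwa [mul_one]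
  linarith

noncomputable def s4S (r θ : ℝ) : ℝ := √(1 - 16 * r * sin θ) / 3

noncomputable def s4J7Primitive (r θ : ℝ) : ℝ :=
  r * cos θ / 576 * ((128 * r ^ 2 + 1 - 24 * r * sin θ) / √(1 - 16 * r * sin θ) - (1 - 16 * r * sin θ))

noncomputable def s4J7Integrand (r θ : ℝ) : ℝ :=
  r / (15552 * s4S r θ ^ 3) *
    (16 * r * cos θ ^ 2 * (9 * s4S r θ ^ 2 * (3 * s4S r θ - 1) + 4 * r * (16 * r - sin θ)) +
      9 * s4S r θ ^ 2 * sin θ * (9 * s4S r θ ^ 2 * (3 * s4S r θ - 1) - 8 * r * (16 * r - sin θ)))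

theorem periodic_s4J7Primitive (r : ℝ) : Function.Periodic (s4J7Primitive r) (2 * π) := by
  intro θ
  simp only [s4J7Primitive, sin_add_two_pi, cos_add_two_pi]

theorem hasDerivAt_s4J7Primitive {r θ : ℝ} (hθ : 0 < 1 - 16 * r * sin θ) :
    HasDerivAt (s4J7Primitive r) (s4J7Integrand r θ) θ := by
  have hw : 0 < √(1 - 16 * r * sin θ) := sqrt_pos.mpr hθ
  have hw2 : √(1 - 16 * r * sin θ) ^ 2 = 1 - 16 * r * sin θ := sq_sqrt hθ.le
  have hrad : HasDerivAt (fun t => 1 - 16 * r * sin t) (-(16 * r * cos θ)) θ := by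
    simpa using ((hasDerivAt_sin θ).const_mul (16 * r)).const_sub 1
  have hnum : HasDerivAt (fun t => 128 * r ^ 2 + 1 - 24 * r * sin t) (-(24 * r * cos θ)) θ := by
    simpa using ((hasDerivAt_sin θ).const_mul (24 * r)).const_sub (128 * r ^ 2 + 1)
  have h := (((hasDerivAt_cos θ).const_mul r).div_const 576).mul
    ((hnum.div (hrad.sqrt hθ.ne') hw.ne').sub hrad)
  refine h.congr_deriv ?_
  simp only [s4J7Integrand, s4S, Pi.sub_apply, Pi.div_apply]
  set w := √(1 - 16 * r * sin θ)
  field_simp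
  linear_combination 93312 * r * (sin θ * w ^ 2 * (1 - w) - 8 * r * cos θ ^ 2) * hw2

theorem continuous_s4J7Integrand {r : ℝ} (hpos : ∀ θ, 0 < 1 - 16 * r * sin θ) :
    Continuous (s4J7Integrand r) := by
  have hS : ∀ θ, 15552 * s4S r θ ^ 3 ≠ 0 := fun θ => by
    have := sqrt_pos.mpr (hpos θ)
    unfold s4S
    positivity
  have : Continuous (s4S r) := by unfold s4S; fun_prop
  unfold s4J7Integrand
  fun_prop (disch := exact hS)

theorem s4_J7_integral_zero
    (r : ℝ) (hr : 0 < r) (hr' : r < 1 / 16)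
    (S : ℝ → ℝ) (hS : ∀ θ : ℝ, S θ = Real.sqrt (1 - 16 * r * Real.sin θ) / 3) :
    ∫ θ in (-Real.pi)..Real.pi,
      r / (15552 * S θ ^ 3) *
        (16 * r * Real.cos θ ^ 2 *
            (9 * S θ ^ 2 * (3 * S θ - 1) + 4 * r * (16 * r - Real.sin θ)) +
          9 * S θ ^ 2 * Real.sin θ *
            (9 * S θ ^ 2 * (3 * S θ - 1) - 8 * r * (16 * r - Real.sin θ))) = 0 := by
  have hpos : ∀ θ, 0 < 1 - 16 * r * sin θ :=
    one_sub_mul_sin_pos (abs_lt.mpr ⟨by linarith, by linarith⟩)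
  obtain rfl : S = s4S r := funext hS
  have h := (periodic_s4J7Primitive r).intervalIntegral_eq_zero_of_hasDerivAt
    (fun θ => hasDerivAt_s4J7Primitive (hpos θ)) (-π)
    ((continuous_s4J7Integrand hpos).intervalIntegrable _ _)
  rwa [neg_add_eq_sub, two_mul, add_sub_cancel_right] at h
end
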